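/- arXiv:1909.13347 — 4 statements merged into one kernel-verified Lean document; each statement's English description precedes it below -/
import Mathlib

section
/- In the unitary product-state setup, for every natural number α ≥ 1, the complex-valued function of the real variable t given by t ↦ trace((ρ_A(t))^α) is differentiable at t = 0 with derivative 0. -/
open Matrix
open scoped Kronecker Matrix

/-- Partial trace over the second tensor factor. -/
noncomputable def ptraceB {ιA ιB : Type*} [Fintype ιA] [Fintype ιB]
    (ρ : Matrix (ιA × ιB) (ιA × ιB) ℂ) : Matrix ιA ιA ℂ :=
  Matrix.of fun a a' => ∑ b, ρ (a, b) (a', b)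

open Complex

/-!
Differentiating the unitary evolution gives `ρ'(0) = -i [H, ρ₀]`, so by cyclicity of the trace
the derivative of `tr (ρ_A t) ^ α` at `0` is `-i α tr ((ρ_A(0) ^ (α - 1) ⊗ 1) [H, ρ₀])`.
For a product state `ρ₀ = X ⊗ Y` the reduced state `ρ_A(0) = tr Y • X` is a multiple of `X`,
so `ρ_A(0) ^ (α - 1) ⊗ 1` commutes with `ρ₀`, and `tr (Q [H, ρ₀]) = tr ([ρ₀, Q] H) = 0`
for every `Q` commuting with `ρ₀`.
-/

theorem Commute.kronecker {l m R : Type*} [Fintype l] [Fintype m] [CommSemiring R]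
    {A C : Matrix l l R} {B D : Matrix m m R} (hAC : Commute A C) (hBD : Commute B D) :
    Commute (A ⊗ₖ B) (C ⊗ₖ D) := by
  simp only [Commute, SemiconjBy, ← mul_kronecker_mul, hAC.eq, hBD.eq]

theorem Matrix.trace_mul_commutator_eq_zero {n R : Type*} [Fintype n] [CommRing R]
    {Q ρ : Matrix n n R} (H : Matrix n n R) (h : Commute Q ρ) :
    (Q * (H * ρ - ρ * H)).trace = 0 := by
  rw [mul_sub, trace_sub, ← mul_assoc, trace_mul_comm (Q * H), ← mul_assoc, ← mul_assoc, h.eq,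
    sub_self]

section PartialTrace

variable {ιA ιB : Type*} [Fintype ιA] [Fintype ιB]

@[simps]
noncomputable def ptraceBLinearMap :
    Matrix (ιA × ιB) (ιA × ιB) ℂ →ₗ[ℂ] Matrix ιA ιA ℂ where
  toFun := ptraceB
  map_add' X Y := by ext; simp [ptraceB, Finset.sum_add_distrib]
  map_smul' c X := by ext; simp [ptraceB, Finset.mul_sum]

theorem ptraceB_kronecker (X : Matrix ιA ιA ℂ) (Y : Matrix ιB ιB ℂ) :
    ptraceB (X ⊗ₖ Y) = Y.trace • X := by
  ext a a'
  simp [ptraceB, trace, ← Finset.mul_sum, mul_comm]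

theorem trace_mul_ptraceB [DecidableEq ιB] (M : Matrix ιA ιA ℂ)
    (X : Matrix (ιA × ιB) (ιA × ιB) ℂ) :
    (M * ptraceB X).trace = ((M ⊗ₖ (1 : Matrix ιB ιB ℂ)) * X).trace := by
  simp only [trace, diag, mul_apply, ptraceB, of_apply, Fintype.sum_prod_type, kroneckerMap_apply,
    one_apply, mul_ite, mul_one, mul_zero, ite_mul, zero_mul, Finset.sum_ite_eq, Finset.mem_univ,
    if_true, Finset.mul_sum]
  exact Finset.sum_congr rfl fun _ _ => Finset.sum_comm

end PartialTrace

theorem hasDerivAt_exp_conj_zero {𝔸 : Type*} [NormedRing 𝔸] [NormedAlgebra ℂ 𝔸]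
    [CompleteSpace 𝔸] (H ρ : 𝔸) :
    HasDerivAt (fun t : ℝ => NormedSpace.exp ((-(t : ℂ) * I) • H) * ρ *
      NormedSpace.exp (((t : ℂ) * I) • H)) (-I • (H * ρ - ρ * H)) 0 := by
  have hneg := hasDerivAt_exp_smul_const (𝕂 := ℝ) (-I • H) 0
  have hpos := hasDerivAt_exp_smul_const (𝕂 := ℝ) (I • H) 0
  have h := (hneg.mul_const ρ).mul hpos
  simp only [zero_smul, NormedSpace.exp_zero, one_mul, mul_one] at h
  convert h using 1
  · funext t
    simp only [Pi.mul_apply, ← Complex.coe_smul, smul_smul, mul_neg, neg_mul]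
  · simp only [neg_smul, neg_mul, smul_mul_assoc, mul_smul_comm, smul_sub]
    abel

section Normed

-- `HasDerivAt.fun_pow'` needs a normed ring; on finite matrices every norm gives the same
-- derivatives, and the `L∞` operator norm is the one Mathlib makes a normed algebra.
attribute [local instance] Matrix.linftyOpNormedRing Matrix.linftyOpNormedAlgebra

theorem HasDerivAt.trace_pow {𝕜 R n : Type*} [NontriviallyNormedField 𝕜] [CompleteSpace 𝕜]
    [NormedCommRing R] [NormedAlgebra 𝕜 R] [FiniteDimensional 𝕜 R] [Fintype n] [DecidableEq n]
    {f : 𝕜 → Matrix n n R} {f' : Matrix n n R} {x : 𝕜} (hf : HasDerivAt f f' x)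
    (k : ℕ) : HasDerivAt (fun t => (f t ^ k).trace) (k * (f x ^ (k - 1) * f').trace) x := by
  refine ((traceLinearMap n 𝕜 R).toContinuousLinearMap.hasFDerivAt.comp_hasDerivAt x
    (hf.fun_pow' k)).congr_deriv ?_
  have hterm : ∀ i ∈ Finset.range k,
      (f x ^ (k.pred - i) * f' * f x ^ i).trace = (f x ^ (k - 1) * f').trace := by
    intro i hi
    rw [trace_mul_comm, ← mul_assoc, ← pow_add, Nat.pred_eq_sub_one,
      Nat.add_sub_of_le (Nat.le_sub_one_of_lt (Finset.mem_range.mp hi))]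
  change (∑ i ∈ Finset.range k, f x ^ (k.pred - i) * f' * f x ^ i).trace = _
  rw [trace_sum, Finset.sum_congr rfl hterm, Finset.sum_const, Finset.card_range, nsmul_eq_mul]

theorem hasDerivAt_trace_pow_ptraceB_exp_conj_kronecker {ιA ιB : Type*}
    [Fintype ιA] [DecidableEq ιA] [Fintype ιB] [DecidableEq ιB]
    (X : Matrix ιA ιA ℂ) (Y : Matrix ιB ιB ℂ) (H : Matrix (ιA × ιB) (ιA × ιB) ℂ)
    (k : ℕ) :
    HasDerivAt (fun t : ℝ => (ptraceB (NormedSpace.exp ((-(t : ℂ) * I) • H) * (X ⊗ₖ Y) *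
      NormedSpace.exp (((t : ℂ) * I) • H)) ^ k).trace) 0 0 := by
  have hρA := (ptraceBLinearMap.restrictScalars ℝ).toContinuousLinearMap.hasFDerivAt
    |>.comp_hasDerivAt 0 (hasDerivAt_exp_conj_zero H (X ⊗ₖ Y))
  have hpow := hρA.trace_pow k
  refine hpow.congr_deriv ?_
  have hcomm : Commute (((Y.trace • X) ^ (k - 1)) ⊗ₖ (1 : Matrix ιB ιB ℂ)) (X ⊗ₖ Y) :=
    (((Commute.refl X).smul_left _).pow_left _).kronecker (Commute.one_left Y)
  simp only [Function.comp_apply, LinearMap.coe_toContinuousLinearMap', ofReal_zero, neg_zero,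
    zero_mul, zero_smul, NormedSpace.exp_zero, one_mul, mul_one, LinearMap.coe_restrictScalars,
    ptraceBLinearMap_apply, ptraceB_kronecker]
  change _ * (_ * ptraceBLinearMap (-I • (H * (X ⊗ₖ Y) - (X ⊗ₖ Y) * H))).trace = 0
  rw [map_smul, ptraceBLinearMap_apply, mul_smul_comm, trace_smul, trace_mul_ptraceB,
    trace_mul_commutator_eq_zero H hcomm, smul_zero, mul_zero]

end Normed

theorem renyi_trace_deriv_zero_general {ιA ιB : Type*}
    [Fintype ιA] [DecidableEq ιA]
    [Fintype ιB] [DecidableEq ιB]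
    (ψA : ιA → ℂ) (ψB : ιB → ℂ)
    (H : Matrix (ιA × ιB) (ιA × ιB) ℂ)
    (ρ₀ : Matrix (ιA × ιB) (ιA × ιB) ℂ)
    (hρ₀ : ρ₀ = (Matrix.vecMulVec ψA (star ψA)) ⊗ₖ (Matrix.vecMulVec ψB (star ψB)))
    (ρ : ℝ → Matrix (ιA × ιB) (ιA × ιB) ℂ)
    (hρ : ∀ t : ℝ, ρ t =
      NormedSpace.exp ((-(t : ℂ) * Complex.I) • H) * ρ₀ *
        NormedSpace.exp (((t : ℂ) * Complex.I) • H))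
    (α : ℕ) :
    HasDerivAt (fun t : ℝ => (ptraceB (ρ t) ^ α).trace) 0 0 := by
  simp only [hρ, hρ₀]
  exact hasDerivAt_trace_pow_ptraceB_exp_conj_kronecker _ _ H α

/-- **First-order stationarity of Rényi traces at `t = 0` in the unitary product-state setup.**
Starting from a pure product density matrix `ρ₀ = P_A ⊗ P_B` evolving unitarily under a
Hermitian Hamiltonian `H = Σₙ Aₙ ⊗ Bₙ`, for every natural `α ≥ 1` the function
`t ↦ trace ((ρ_A t) ^ α)` is differentiable at `t = 0` with derivative `0`. -/
theorem renyi_trace_deriv_zero {ιA ιB : Type*}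
    [Fintype ιA] [DecidableEq ιA] [Nonempty ιA]
    [Fintype ιB] [DecidableEq ιB] [Nonempty ιB]
    (ψA : ιA → ℂ) (ψB : ιB → ℂ)
    (hψA : star ψA ⬝ᵥ ψA = 1) (hψB : star ψB ⬝ᵥ ψB = 1)
    {N : Type*} [Fintype N]
    (A : N → Matrix ιA ιA ℂ) (B : N → Matrix ιB ιB ℂ)
    (H : Matrix (ιA × ιB) (ιA × ιB) ℂ)
    (hH : H = ∑ n, (A n) ⊗ₖ (B n))
    (hHerm : H.IsHermitian)
    (ρ₀ : Matrix (ιA × ιB) (ιA × ιB) ℂ)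
    (hρ₀ : ρ₀ = (Matrix.vecMulVec ψA (star ψA)) ⊗ₖ (Matrix.vecMulVec ψB (star ψB)))
    (ρ : ℝ → Matrix (ιA × ιB) (ιA × ιB) ℂ)
    (hρ : ∀ t : ℝ, ρ t =
      NormedSpace.exp ((-(t : ℂ) * Complex.I) • H) * ρ₀ *
        NormedSpace.exp (((t : ℂ) * Complex.I) • H))
    (α : ℕ) (hα : 1 ≤ α) :
    HasDerivAt (fun t : ℝ => (ptraceB (ρ t) ^ α).trace) 0 0 :=
  renyi_trace_deriv_zero_general ψA ψB H ρ₀ hρ₀ ρ hρ α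
end

section
/- Let ιA and ιB be nonempty finite types, ψA : ιA → ℂ and ψB : ιB → ℂ unit vectors, N a finite index set, and (A_n)_{n∈N}, (B_n)_{n∈N} families of Hermitian complex matrices over ιA resp. ιB. Then the complex number Σ_{n,m∈N} Cov_A(n,m)·Cov_B(n,m) is real and nonnegative, i.e. its imaginary part is 0 and its real part is ≥ 0. (Consequently the inverse square of the universal entanglement timescale, T_ent⁻² = Σ_{n,m} Cov_A(n,m)·Cov_B(n,m), is nonnegative.) -/
open Matrix
open scoped Matrix

/-- The expectation value `⟨M⟩_ψ = ψᴴ · M · ψ` of a matrix in a vector state. -/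
noncomputable def expval {ι : Type*} [Fintype ι] (ψ : ι → ℂ) (M : Matrix ι ι ℂ) : ℂ :=
  star ψ ⬝ᵥ (M *ᵥ ψ)

lemma cov_eq_aux {ι : Type*} [Fintype ι] (ψ : ι → ℂ) (hψ : star ψ ⬝ᵥ ψ = 1)
    (M P : Matrix ι ι ℂ) (hM : M.IsHermitian) :
    star (M *ᵥ ψ - expval ψ M • ψ) ⬝ᵥ (P *ᵥ ψ - expval ψ P • ψ)
      = expval ψ (M * P) - expval ψ M * expval ψ P := by
  have key : ∀ u : ι → ℂ, star (M *ᵥ ψ) ⬝ᵥ u = star ψ ⬝ᵥ (M *ᵥ u) := by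
    intro u
    rw [star_mulVec, hM.eq, ← dotProduct_mulVec]
  simp only [star_sub, star_smul, sub_dotProduct, dotProduct_sub, smul_dotProduct,
    dotProduct_smul, key, mulVec_mulVec, hψ]
  simp only [smul_eq_mul, mul_one]
  have h2 : star ψ ⬝ᵥ (M *ᵥ ψ) = expval ψ M := rfl
  rw [h2]
  unfold expval
  ring

lemma sum_dotProduct_aux {ι κ : Type*} [Fintype ι] [Fintype κ] (u : κ → ι → ℂ) (x : ι → ℂ) :
    (∑ n, u n) ⬝ᵥ x = ∑ n, u n ⬝ᵥ x := by
  simp only [dotProduct, Finset.sum_apply, Finset.sum_mul]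
  exact Finset.sum_comm

lemma dotProduct_sum_aux {ι κ : Type*} [Fintype ι] [Fintype κ] (x : ι → ℂ) (u : κ → ι → ℂ) :
    x ⬝ᵥ (∑ n, u n) = ∑ n, x ⬝ᵥ u n := by
  simp only [dotProduct, Finset.sum_apply, Finset.mul_sum]
  exact Finset.sum_comm

lemma tensor_sum_aux {ιA ιB N : Type*} [Fintype ιA] [Fintype ιB] [Fintype N]
    (v : N → ιA → ℂ) (w : N → ιB → ℂ) :
    ∑ n, ∑ m, (star (v n) ⬝ᵥ v m) * (star (w n) ⬝ᵥ w m)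
      = star (∑ n, fun p : ιA × ιB => v n p.1 * w n p.2)
          ⬝ᵥ (∑ m, fun p : ιA × ιB => v m p.1 * w m p.2) := by
  rw [star_sum, sum_dotProduct_aux]
  refine Finset.sum_congr rfl fun n _ => ?_
  rw [dotProduct_sum_aux]
  refine Finset.sum_congr rfl fun m _ => ?_
  simp only [dotProduct, Fintype.sum_prod_type, Finset.sum_mul_sum, Pi.star_apply, star_mul']
  refine Finset.sum_congr rfl fun a _ => ?_
  refine Finset.sum_congr rfl fun b _ => ?_
  ring

/-- **Nonnegativity of the inverse-square universal entanglement timescale.**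
For unit vectors `ψA, ψB` and families of Hermitian matrices `(Aₙ)`, `(Bₙ)`, the
covariance sum `Σ_{n,m} Cov_A(n,m)·Cov_B(n,m)` is a nonnegative real number:
its imaginary part vanishes and its real part is nonnegative. -/
theorem covariance_sum_nonneg {ιA ιB : Type*}
    [Fintype ιA] [DecidableEq ιA] [Nonempty ιA]
    [Fintype ιB] [DecidableEq ιB] [Nonempty ιB]
    (ψA : ιA → ℂ) (ψB : ιB → ℂ)
    (hψA : star ψA ⬝ᵥ ψA = 1) (hψB : star ψB ⬝ᵥ ψB = 1)
    {N : Type*} [Fintype N]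
    (A : N → Matrix ιA ιA ℂ) (B : N → Matrix ιB ιB ℂ)
    (hA : ∀ n, (A n).IsHermitian) (hB : ∀ n, (B n).IsHermitian) :
    (∑ n, ∑ m,
        (expval ψA (A n * A m) - expval ψA (A n) * expval ψA (A m)) *
          (expval ψB (B n * B m) - expval ψB (B n) * expval ψB (B m))).im = 0 ∧
      0 ≤ (∑ n, ∑ m,
        (expval ψA (A n * A m) - expval ψA (A n) * expval ψA (A m)) *
          (expval ψB (B n * B m) - expval ψB (B n) * expval ψB (B m))).re := by
  set v : N → ιA → ℂ := fun n => A n *ᵥ ψA - expval ψA (A n) • ψA with hv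
  set w : N → ιB → ℂ := fun n => B n *ᵥ ψB - expval ψB (B n) • ψB with hw
  have hrw : (∑ n, ∑ m,
        (expval ψA (A n * A m) - expval ψA (A n) * expval ψA (A m)) *
          (expval ψB (B n * B m) - expval ψB (B n) * expval ψB (B m)))
      = ∑ n, ∑ m, (star (v n) ⬝ᵥ v m) * (star (w n) ⬝ᵥ w m) := by
    refine Finset.sum_congr rfl fun n _ => Finset.sum_congr rfl fun m _ => ?_
    rw [cov_eq_aux ψA hψA (A n) (A m) (hA n), cov_eq_aux ψB hψB (B n) (B m) (hB n)]
  rw [hrw, tensor_sum_aux v w]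
  set z : ιA × ιB → ℂ := ∑ n, fun p : ιA × ιB => v n p.1 * w n p.2 with hz
  have hzz : star z ⬝ᵥ z = ((∑ p, Complex.normSq (z p) : ℝ) : ℂ) := by
    simp only [dotProduct, Pi.star_apply]
    push_cast
    refine Finset.sum_congr rfl fun p _ => ?_
    rw [mul_comm]
    exact Complex.mul_conj (z p)
  rw [hzz]
  constructor
  · simp
  · simp only [Complex.ofReal_re]
    exact Finset.sum_nonneg fun p _ => Complex.normSq_nonneg _
end

section
/- Let X : ℝ → Matrix n n ℂ (n a nonempty finite type) be entrywise differentiable at t₀ with derivative X', and suppose X(t₀) is invertible. Then the real-valued function t ↦ ‖X(t)‖₁ is differentiable at t₀, with derivative equal to the real part of trace( |X(t₀)|⁻¹ · X(t₀)ᴴ · X' ). -/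
open Matrix
open scoped ComplexOrder

/-- The matrix absolute value `|X|`: the unique positive semidefinite square root of `Xᴴ * X`. -/
noncomputable def matAbs {n : Type*} [Fintype n] [DecidableEq n] (X : Matrix n n ℂ) :
    Matrix n n ℂ :=
  (Matrix.posSemidef_conjTranspose_mul_self X).1.eigenvectorUnitary.1 *
    diagonal ((↑) ∘ (√·) ∘ (Matrix.posSemidef_conjTranspose_mul_self X).1.eigenvalues) *
    (star (Matrix.posSemidef_conjTranspose_mul_self X).1.eigenvectorUnitary : Matrix n n ℂ)

/-- The trace norm `‖X‖₁ = trace |X|` (a real number). -/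
noncomputable def traceNorm {n : Type*} [Fintype n] [DecidableEq n] (X : Matrix n n ℂ) : ℝ :=
  ((matAbs X).trace).re

/-!
Write `|X| = √(XᴴX)`. On positive semidefinite matrices `√` is a continuous right inverse of
`M ↦ M * M`, whose derivative at `S` is the Sylvester operator `H ↦ S * H + H * S`; for `S`
positive definite this operator is invertible, so `√` is differentiable at every positive
definite `A` (the easy half of the inverse function theorem). Hence `d|X| = H` with
`|X| H + H |X| = X'ᴴ X + Xᴴ X'`. Multiplying by `|X|⁻¹` and taking traces gives
`2 tr H = tr (|X|⁻¹ X'ᴴ X) + tr (|X|⁻¹ Xᴴ X')`, and the two terms are complex conjugates.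
-/

open scoped MatrixOrder Matrix.Norms.L2Operator

namespace Matrix

theorem hasDerivAt_iff_hasDerivAt_apply {𝕜 E : Type*} [NontriviallyNormedField 𝕜]
    [NormedAddCommGroup E] [NormedSpace 𝕜 E] {m n : Type*} [Fintype n]
    {X : 𝕜 → Matrix m n E} {X' : Matrix m n E} {t : 𝕜} :
    HasDerivAt X X' t ↔ ∀ i j, HasDerivAt (fun s => X s i j) (X' i j) t :=
  hasDerivAt_pi.trans (forall_congr' fun _ => hasDerivAt_pi)

variable {𝕜 : Type*} [RCLike 𝕜] {n : Type*} [Fintype n]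

theorem re_trace_mul_conjTranspose {T : Matrix n n 𝕜} (hT : T.IsHermitian) (M : Matrix n n 𝕜) :
    RCLike.re (T * Mᴴ).trace = RCLike.re (T * M).trace := by
  rw [← hT.eq, ← conjTranspose_mul, trace_conjTranspose, trace_mul_comm, hT.eq]
  exact RCLike.conj_re _

def sylvester (S : Matrix n n 𝕜) : Matrix n n 𝕜 →ₗ[𝕜] Matrix n n 𝕜 :=
  LinearMap.mulLeft 𝕜 S + LinearMap.mulRight 𝕜 S

@[simp]
theorem sylvester_apply (S H : Matrix n n 𝕜) : sylvester S H = S * H + H * S := rfl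

variable [DecidableEq n]

theorem hasFDerivAt_mul_self (S : Matrix n n 𝕜) :
    HasFDerivAt (fun M : Matrix n n 𝕜 => M * M) (sylvester S).toContinuousLinearMap S :=
  ((hasFDerivAt_id S).mul' (hasFDerivAt_id S)).congr_fderiv <|
    ContinuousLinearMap.ext fun H => by simp

theorem PosDef.posDef_sqrt {A : Matrix n n 𝕜} (hA : A.PosDef) : (CFC.sqrt A).PosDef :=
  hA.isStrictlyPositive.sqrt.posDef

theorem trace_inv_mul_sylvester {S : Matrix n n 𝕜} (hS : IsUnit S) (H : Matrix n n 𝕜) :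
    (S⁻¹ * sylvester S H).trace = 2 * H.trace := by
  have hdet := (isUnit_iff_isUnit_det S).mp hS
  rw [sylvester_apply, Matrix.mul_add, trace_add, ← Matrix.mul_assoc, nonsing_inv_mul _ hdet,
    Matrix.one_mul, ← Matrix.mul_assoc, trace_mul_cycle, mul_nonsing_inv _ hdet, Matrix.one_mul,
    two_mul]

theorem re_trace_eq_of_sylvester_eq {S H M : Matrix n n 𝕜} (hS : S.PosDef)
    (h : sylvester S H = Mᴴ + M) : RCLike.re H.trace = RCLike.re (S⁻¹ * M).trace := by
  have h2 := congrArg RCLike.re (trace_inv_mul_sylvester hS.isUnit H)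
  rw [h, Matrix.mul_add, trace_add, map_add, re_trace_mul_conjTranspose hS.isHermitian.inv,
    RCLike.ofNat_mul_re] at h2
  linarith

/-- With `B = √S`, `tr (Hᴴ (S H + H S)) = ‖B H‖² + ‖H B‖²` (Frobenius norms), so `S H + H S = 0`
forces `H B = 0`. -/
theorem sylvester_injective {S : Matrix n n 𝕜} (hS : S.PosDef) :
    Function.Injective (sylvester S) := by
  rw [injective_iff_map_eq_zero]
  intro H hH
  set B := CFC.sqrt S
  have hB : Bᴴ = B := hS.posDef_sqrt.isHermitian
  have hBB : B * B = S := CFC.sqrt_mul_sqrt_self S hS.posSemidef.nonneg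
  have hsum : ((B * H)ᴴ * (B * H)).trace + ((H * B)ᴴ * (H * B)).trace = 0 := by
    calc _ = (Hᴴ * sylvester S H).trace := by
          rw [sylvester_apply, ← hBB, conjTranspose_mul, conjTranspose_mul, hB, Matrix.mul_add,
            trace_add]
          simp only [Matrix.mul_assoc]
          rw [trace_mul_comm B]
          simp only [Matrix.mul_assoc]
      _ = 0 := by rw [hH, Matrix.mul_zero, trace_zero]
  have hHB : H * B = 0 := by
    rw [← trace_conjTranspose_mul_self_eq_zero_iff]
    exact (add_eq_zero_iff_of_nonneg (posSemidef_conjTranspose_mul_self _).trace_nonneg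
      (posSemidef_conjTranspose_mul_self _).trace_nonneg).mp hsum |>.2
  exact hS.posDef_sqrt.isUnit.mul_left_eq_zero.mp hHB

noncomputable def sylvesterEquiv {S : Matrix n n 𝕜} (hS : S.PosDef) :
    Matrix n n 𝕜 ≃L[𝕜] Matrix n n 𝕜 :=
  (LinearEquiv.ofInjectiveEndo (sylvester S) (sylvester_injective hS)).toContinuousLinearEquiv

@[simp]
theorem sylvesterEquiv_apply {S : Matrix n n 𝕜} (hS : S.PosDef) (H : Matrix n n 𝕜) :
    sylvesterEquiv hS H = sylvester S H := rfl

theorem hasFDerivWithinAt_sqrt {A : Matrix n n ℂ} (hA : A.PosDef) :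
    HasFDerivWithinAt CFC.sqrt
      ((sylvesterEquiv hA.posDef_sqrt).symm : Matrix n n ℂ →L[ℂ] _) {B | 0 ≤ B} A := by
  refine HasFDerivWithinAt.of_local_left_inverse (t := Set.univ) ?_
    (hasFDerivAt_mul_self _).hasFDerivWithinAt hA.posSemidef.nonneg ?_
  · rw [nhdsWithin_univ]
    exact CFC.continuousOn_sqrt A hA.posSemidef.nonneg
  · filter_upwards [self_mem_nhdsWithin] with B hB
    exact CFC.sqrt_mul_sqrt_self B hB

end Matrix

theorem HasDerivAt.re_trace {n : Type*} [Fintype n] [DecidableEq n]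
    {F : ℝ → Matrix n n ℂ} {F' : Matrix n n ℂ} {t : ℝ} (h : HasDerivAt F F' t) : HasDerivAt (fun s => (F s).trace.re) F'.trace.re t :=
  (Complex.reCLM.comp ((traceLinearMap n ℂ ℂ).restrictScalars ℝ).toContinuousLinearMap)
    |>.hasFDerivAt.comp_hasDerivAt t h

theorem matAbs_eq_sqrt {n : Type*} [Fintype n] [DecidableEq n] (X : Matrix n n ℂ) :
    matAbs X = CFC.sqrt (Xᴴ * X) := by
  have hA := posSemidef_conjTranspose_mul_self X
  rw [CFC.sqrt_eq_cfc, cfc_nnreal_eq_real _ _ hA.nonneg, hA.1.cfc_eq]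
  simp [matAbs, IsHermitian.cfc, Function.comp_def, max_eq_left (hA.eigenvalues_nonneg _)]

theorem traceNorm_hasDerivAt_general {n : Type*} [Fintype n] [DecidableEq n]
    (X : ℝ → Matrix n n ℂ) (X' : Matrix n n ℂ) (t₀ : ℝ)
    (hX : ∀ i j, HasDerivAt (fun t => X t i j) (X' i j) t₀)
    (hinv : IsUnit (X t₀)) :
    HasDerivAt (fun t => traceNorm (X t))
      ((((matAbs (X t₀))⁻¹ * (X t₀)ᴴ * X').trace).re) t₀ := by
  have hXd : HasDerivAt X X' t₀ := hasDerivAt_iff_hasDerivAt_apply.mpr hX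
  have hA : HasDerivAt (fun t => (X t)ᴴ * X t) (X'ᴴ * X t₀ + (X t₀)ᴴ * X') t₀ :=
    hXd.star.fun_mul hXd
  have hA₀ : ((X t₀)ᴴ * X t₀).PosDef :=
    .conjTranspose_mul_self _ (mulVec_injective_iff_isUnit.mpr hinv)
  set H := (sylvesterEquiv hA₀.posDef_sqrt).symm (X'ᴴ * X t₀ + (X t₀)ᴴ * X')
  have hH : HasDerivAt (CFC.sqrt ∘ fun t => (X t)ᴴ * X t) H t₀ :=
    ((hasFDerivWithinAt_sqrt hA₀).restrictScalars ℝ).comp_hasDerivAt t₀ hA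
      (.of_forall fun t => (posSemidef_conjTranspose_mul_self (X t)).nonneg)
  have hsylv : sylvester (CFC.sqrt ((X t₀)ᴴ * X t₀)) H = ((X t₀)ᴴ * X')ᴴ + (X t₀)ᴴ * X' := by
    rw [← sylvesterEquiv_apply hA₀.posDef_sqrt, ContinuousLinearEquiv.apply_symm_apply,
      conjTranspose_mul, conjTranspose_conjTranspose]
  have hval : H.trace.re = ((CFC.sqrt ((X t₀)ᴴ * X t₀))⁻¹ * ((X t₀)ᴴ * X')).trace.re :=
    re_trace_eq_of_sylvester_eq hA₀.posDef_sqrt hsylv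
  simpa only [traceNorm, matAbs_eq_sqrt, Matrix.mul_assoc, hval, Function.comp_apply]
    using hH.re_trace

/-- **Derivative of the trace norm along a differentiable matrix path.**
If `X : ℝ → Matrix n n ℂ` is entrywise differentiable at `t₀` with derivative `X'` and `X t₀`
is invertible, then `t ↦ ‖X t‖₁` is differentiable at `t₀` with derivative
`Re trace (|X t₀|⁻¹ * (X t₀)ᴴ * X')`. -/
theorem traceNorm_hasDerivAt {n : Type*} [Fintype n] [DecidableEq n] [Nonempty n]
    (X : ℝ → Matrix n n ℂ) (X' : Matrix n n ℂ) (t₀ : ℝ)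
    (hX : ∀ i j, HasDerivAt (fun t => X t i j) (X' i j) t₀)
    (hinv : IsUnit (X t₀)) :
    HasDerivAt (fun t => traceNorm (X t))
      ((((matAbs (X t₀))⁻¹ * (X t₀)ᴴ * X').trace).re) t₀ :=
  traceNorm_hasDerivAt_general X X' t₀ hX hinv
end

section
/- For every ρ : Matrix (ιA × ιB) (ιA × ιB) ℂ, the trace norm of the partial transpose is bounded by ‖ρ^{T_B}‖₁ ≤ min(d_A, d_B) · ‖ρ‖₁. -/
open Matrix
open scoped ComplexOrder

/-- Partial transpose over the second tensor factor:
`ρ^{T_B} ((a,b),(a',b')) = ρ ((a,b'),(a',b))`. -/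
def ptransB {ιA ιB : Type*} (ρ : Matrix (ιA × ιB) (ιA × ιB) ℂ) :
    Matrix (ιA × ιB) (ιA × ιB) ℂ :=
  Matrix.of fun p q => ρ (p.1, q.2) (q.1, p.2)

/-!
Expand `ρ = ∑ⱼ (ρ vⱼ) vⱼᴴ` along the right singular vectors `vⱼ` of `ρ`, for which
`∑ⱼ ‖ρ vⱼ‖ = ‖ρ‖₁`. The partial transpose is linear and the trace norm is subadditive
(it is the supremum of `Re tr (W X)` over contractions `W`), so it suffices to treat a rank-one
term `N = (x yᴴ)^{T_B}`. Such an `N` factors through a space of dimension `min(d_A, d_B)²`, so its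
rank is at most `min(d_A, d_B)²`, while its Hilbert–Schmidt norm is `‖x‖ ‖y‖`; Cauchy–Schwarz over
the nonzero singular values gives `‖N‖₁ ≤ √(rank N) ‖N‖₂ ≤ min(d_A, d_B) ‖x‖ ‖y‖`.
-/

open WithLp

section TraceNorm

variable {n : Type*} [Fintype n]

theorem star_dotProduct_orthonormalBasis {ι : Type*} [Fintype ι] [DecidableEq ι]
    (b : OrthonormalBasis ι ℂ (EuclideanSpace ℂ n)) (i j : ι) :
    star ⇑(b i) ⬝ᵥ ⇑(b j) = if i = j then 1 else 0 := by
  rw [dotProduct_comm, ← EuclideanSpace.inner_eq_star_dotProduct,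
    orthonormal_iff_ite.mp b.orthonormal]

theorem re_trace_conjTranspose_mul_self (X : Matrix n n ℂ) :
    (Xᴴ * X).trace.re = ∑ i, ∑ j, ‖X i j‖ ^ 2 := by
  rw [Finset.sum_comm]
  simp only [trace, diag, mul_apply, conjTranspose_apply, Complex.star_def, Complex.conj_mul',
    Complex.re_sum]
  norm_cast

variable [DecidableEq n]

theorem sum_vecMulVec_orthonormalBasis {ι : Type*} [Fintype ι]
    (b : OrthonormalBasis ι ℂ (EuclideanSpace ℂ n)) :
    ∑ i, vecMulVec ⇑(b i) (star ⇑(b i)) = 1 := by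
  refine ext_iff_mulVec.mpr fun v => ?_
  rw [sum_mulVec, one_mulVec]
  simp_rw [vecMulVec_mulVec]
  have h := congrArg ofLp (b.sum_repr' (toLp 2 v))
  simp only [ofLp_sum, ofLp_smul, EuclideanSpace.inner_eq_star_dotProduct] at h
  refine Eq.trans (Finset.sum_congr rfl fun i _ => ?_) h
  rw [dotProduct_comm, op_smul_eq_smul]

theorem eq_sum_vecMulVec_mulVec {ι : Type*} [Fintype ι] (X : Matrix n n ℂ)
    (b : OrthonormalBasis ι ℂ (EuclideanSpace ℂ n)) :
    X = ∑ i, vecMulVec (X *ᵥ b i) (star ⇑(b i)) := by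
  conv_lhs => rw [← X.mul_one, ← sum_vecMulVec_orthonormalBasis b, Finset.mul_sum]
  simp_rw [mul_vecMulVec]

noncomputable def singularBasis (X : Matrix n n ℂ) : OrthonormalBasis n ℂ (EuclideanSpace ℂ n) :=
  (posSemidef_conjTranspose_mul_self X).1.eigenvectorBasis

noncomputable def singularValues (X : Matrix n n ℂ) (j : n) : ℝ :=
  √((posSemidef_conjTranspose_mul_self X).1.eigenvalues j)

theorem conjTranspose_mul_self_mulVec_singularBasis (X : Matrix n n ℂ) (j : n) :
    (Xᴴ * X) *ᵥ ⇑(singularBasis X j) = ((singularValues X j : ℂ) ^ 2) • ⇑(singularBasis X j) := by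
  have hX := posSemidef_conjTranspose_mul_self X
  rw [singularValues, ← Complex.ofReal_pow, Real.sq_sqrt (hX.eigenvalues_nonneg j)]
  exact (hX.1.mulVec_eigenvectorBasis j).trans (by ext; simp [Complex.real_smul, singularBasis])

theorem star_mulVec_singularBasis_dotProduct (X : Matrix n n ℂ) (i j : n) :
    star (X *ᵥ singularBasis X i) ⬝ᵥ (X *ᵥ singularBasis X j) =
      if i = j then (singularValues X i : ℂ) ^ 2 else 0 := by
  rw [star_mulVec, ← dotProduct_mulVec, mulVec_mulVec,
    conjTranspose_mul_self_mulVec_singularBasis, dotProduct_smul,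
    star_dotProduct_orthonormalBasis]
  split_ifs with h
  · rw [h, smul_eq_mul, mul_one]
  · rw [smul_zero]

theorem norm_mulVec_singularBasis (X : Matrix n n ℂ) (j : n) :
    ‖toLp 2 (X *ᵥ singularBasis X j)‖ = singularValues X j := by
  have h := star_mulVec_singularBasis_dotProduct X j j
  rw [if_pos rfl, dotProduct_comm, ← EuclideanSpace.inner_toLp_toLp,
    inner_self_eq_norm_sq_to_K] at h
  exact (pow_left_inj₀ (norm_nonneg _) (Real.sqrt_nonneg _) two_ne_zero).mp
    (Complex.ofReal_injective (by push_cast; exact h))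

theorem traceNorm_eq_sum_singularValues (X : Matrix n n ℂ) :
    traceNorm X = ∑ j, singularValues X j := by
  rw [traceNorm, matAbs, trace_mul_cycle, Unitary.coe_star_mul_self, one_mul, trace_diagonal,
    Complex.re_sum]
  rfl

theorem traceNorm_nonneg (X : Matrix n n ℂ) : 0 ≤ traceNorm X := by
  rw [traceNorm_eq_sum_singularValues]
  exact Finset.sum_nonneg fun j _ => Real.sqrt_nonneg _

theorem norm_trace_mul_le (M X : Matrix n n ℂ) {C : ℝ}
    (hM : ∀ v, ‖toLp 2 (M *ᵥ v)‖ ≤ C * ‖toLp 2 v‖) :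
    ‖(M * X).trace‖ ≤ C * traceNorm X := by
  set b := singularBasis X
  conv_lhs => rw [eq_sum_vecMulVec_mulVec X b]
  rw [Finset.mul_sum, trace_sum, traceNorm_eq_sum_singularValues, Finset.mul_sum]
  refine (norm_sum_le _ _).trans (Finset.sum_le_sum fun j _ => ?_)
  rw [mul_vecMulVec, trace_vecMulVec, mulVec_mulVec, ← norm_mulVec_singularBasis,
    ← mulVec_mulVec]
  calc ‖M *ᵥ (X *ᵥ b j) ⬝ᵥ star ⇑(b j)‖ = ‖inner ℂ (b j) (toLp 2 (M *ᵥ (X *ᵥ b j)))‖ := rfl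
    _ ≤ ‖toLp 2 (M *ᵥ (X *ᵥ b j))‖ := by
      simpa [b.norm_eq_one] using norm_inner_le_norm (𝕜 := ℂ) (b j) _
    _ ≤ C * ‖toLp 2 (X *ᵥ b j)‖ := hM _

/-- Zero when the singular value vanishes, since `0⁻¹ = 0`. -/
noncomputable def leftSingularVector (X : Matrix n n ℂ) (j : n) : n → ℂ :=
  (singularValues X j : ℂ)⁻¹ • (X *ᵥ singularBasis X j)

theorem orthonormal_leftSingularVector (X : Matrix n n ℂ) :
    Orthonormal ℂ fun j : {j // singularValues X j ≠ 0} => toLp 2 (leftSingularVector X j) := by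
  refine orthonormal_iff_ite.mpr fun i j => ?_
  rw [EuclideanSpace.inner_toLp_toLp, dotProduct_comm, leftSingularVector, leftSingularVector,
    star_smul, smul_dotProduct, dotProduct_smul, star_mulVec_singularBasis_dotProduct]
  by_cases h : i = j
  · subst h
    have hσ : (singularValues X i : ℂ) ≠ 0 := Complex.ofReal_ne_zero.mpr i.2
    simp only [↓reduceIte, smul_eq_mul, star_inv₀, Complex.star_def, Complex.conj_ofReal]
    field_simp
  · rw [if_neg (Subtype.coe_injective.ne h), if_neg h, smul_zero, smul_zero]

theorem sum_sq_norm_star_leftSingularVector_dotProduct_le (X : Matrix n n ℂ) (z : n → ℂ) :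
    ∑ j, ‖star (leftSingularVector X j) ⬝ᵥ z‖ ^ 2 ≤ ‖toLp 2 z‖ ^ 2 := by
  have hzero : ∀ j, singularValues X j = 0 → leftSingularVector X j = 0 := fun j hj => by
    rw [leftSingularVector, hj, Complex.ofReal_zero, _root_.inv_zero, zero_smul]
  rw [← Fintype.sum_subtype_add_sum_subtype (fun j => singularValues X j = 0),
    Finset.sum_eq_zero fun j _ => by
      rw [hzero j j.2, star_zero, zero_dotProduct, norm_zero, zero_pow two_ne_zero], zero_add]
  refine le_of_eq_of_le (Finset.sum_congr rfl fun j _ => ?_)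
    ((orthonormal_leftSingularVector X).sum_inner_products_le (toLp 2 z) (s := Finset.univ))
  rw [EuclideanSpace.inner_toLp_toLp, dotProduct_comm]

/-- `W = ∑ⱼ vⱼ uⱼᴴ` is the adjoint of the polar part of `X`, so that `W * X = |X|`. -/
theorem exists_contraction_trace_mul_eq_traceNorm (X : Matrix n n ℂ) :
    ∃ W : Matrix n n ℂ, (∀ v, ‖toLp 2 (W *ᵥ v)‖ ≤ ‖toLp 2 v‖) ∧ (W * X).trace = traceNorm X := by
  set b := singularBasis X
  refine ⟨∑ j, vecMulVec (b j) (star (leftSingularVector X j)), fun z => ?_, ?_⟩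
  · have hcoord : ∀ i, inner ℂ (b i)
        (toLp 2 ((∑ j, vecMulVec (b j) (star (leftSingularVector X j))) *ᵥ z)) =
          star (leftSingularVector X i) ⬝ᵥ z := fun i => by
      rw [EuclideanSpace.inner_toLp_toLp, dotProduct_comm, sum_mulVec, dotProduct_sum]
      simp only [vecMulVec_mulVec, op_smul_eq_smul, dotProduct_smul,
        star_dotProduct_orthonormalBasis, smul_eq_mul, mul_ite, mul_one, mul_zero,
        Finset.sum_ite_eq, Finset.mem_univ, if_true]
    rw [← sq_le_sq₀ (norm_nonneg _) (norm_nonneg _), ← b.sum_sq_norm_inner_right]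
    simp_rw [hcoord]
    exact sum_sq_norm_star_leftSingularVector_dotProduct_le X z
  · rw [Finset.sum_mul, trace_sum, traceNorm_eq_sum_singularValues, Complex.ofReal_sum]
    refine Finset.sum_congr rfl fun j _ => ?_
    rw [trace_mul_comm, mul_vecMulVec, trace_vecMulVec, dotProduct_comm, leftSingularVector,
      star_smul, smul_dotProduct, star_mulVec_singularBasis_dotProduct, if_pos rfl, smul_eq_mul,
      star_inv₀, Complex.star_def, Complex.conj_ofReal, sq, ← mul_assoc, inv_mul_mul_self]

theorem traceNorm_add_le (X Y : Matrix n n ℂ) : traceNorm (X + Y) ≤ traceNorm X + traceNorm Y := by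
  obtain ⟨W, hW, htrace⟩ := exists_contraction_trace_mul_eq_traceNorm (X + Y)
  have hW' : ∀ v, ‖toLp 2 (W *ᵥ v)‖ ≤ 1 * ‖toLp 2 v‖ := fun v => (hW v).trans_eq (one_mul _).symm
  calc traceNorm (X + Y) = (W * X).trace.re + (W * Y).trace.re := by
        rw [← Complex.add_re, ← trace_add, ← mul_add, htrace, Complex.ofReal_re]
    _ ≤ ‖(W * X).trace‖ + ‖(W * Y).trace‖ :=
        add_le_add (Complex.re_le_norm _) (Complex.re_le_norm _)
    _ ≤ 1 * traceNorm X + 1 * traceNorm Y :=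
        add_le_add (norm_trace_mul_le W X hW') (norm_trace_mul_le W Y hW')
    _ = traceNorm X + traceNorm Y := by rw [one_mul, one_mul]

theorem traceNorm_zero : traceNorm (0 : Matrix n n ℂ) = 0 := by
  obtain ⟨W, -, htrace⟩ := exists_contraction_trace_mul_eq_traceNorm (0 : Matrix n n ℂ)
  rw [mul_zero, trace_zero] at htrace
  exact_mod_cast htrace.symm

theorem traceNorm_sum_le {ι : Type*} (s : Finset ι) (X : ι → Matrix n n ℂ) :
    traceNorm (∑ i ∈ s, X i) ≤ ∑ i ∈ s, traceNorm (X i) :=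
  Finset.le_sum_of_subadditive traceNorm traceNorm_zero.le traceNorm_add_le s X

theorem sq_traceNorm_le_rank_mul_sum_sq_norm (X : Matrix n n ℂ) :
    traceNorm X ^ 2 ≤ X.rank * ∑ i, ∑ j, ‖X i j‖ ^ 2 := by
  have hX := posSemidef_conjTranspose_mul_self X
  set eigs := hX.1.eigenvalues
  set support : n → ℝ := fun j => if eigs j ≠ 0 then 1 else 0
  have hsupport : ∀ j, support j * singularValues X j = singularValues X j := fun j => by
    by_cases h : eigs j = 0
    · rw [singularValues, show hX.1.eigenvalues j = 0 from h, Real.sqrt_zero, mul_zero]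
    · rw [show support j = 1 from if_pos h, one_mul]
  have hcard : ∑ j, support j ^ 2 = X.rank := by
    rw [← rank_conjTranspose_mul_self, hX.1.rank_eq_card_non_zero_eigs, Fintype.card_subtype]
    simp only [support, ite_pow, one_pow, zero_pow two_ne_zero, Finset.sum_boole]
    rfl
  have hsum : ∑ j, singularValues X j ^ 2 = ∑ i, ∑ j, ‖X i j‖ ^ 2 := by
    rw [← re_trace_conjTranspose_mul_self, hX.1.trace_eq_sum_eigenvalues, Complex.re_sum]
    refine Finset.sum_congr rfl fun j _ => ?_
    rw [singularValues, Real.sq_sqrt (hX.eigenvalues_nonneg j)]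
    rfl
  calc traceNorm X ^ 2 = (∑ j, support j * singularValues X j) ^ 2 := by
        simp_rw [hsupport, traceNorm_eq_sum_singularValues]
    _ ≤ (∑ j, support j ^ 2) * ∑ j, singularValues X j ^ 2 :=
        Finset.sum_mul_sq_le_sq_mul_sq _ _ _
    _ = X.rank * ∑ i, ∑ j, ‖X i j‖ ^ 2 := by rw [hcard, hsum]

end TraceNorm

section PartialTranspose

variable {ιA ιB : Type*}

theorem ptransB_sum {ι : Type*} (s : Finset ι) (ρ : ι → Matrix (ιA × ιB) (ιA × ιB) ℂ) :
    ptransB (∑ i ∈ s, ρ i) = ∑ i ∈ s, ptransB (ρ i) := by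
  ext p q
  simp only [ptransB, of_apply, Matrix.sum_apply]

variable [Fintype ιA] [Fintype ιB]

theorem sum_sq_norm_ptransB_vecMulVec (x y : ιA × ιB → ℂ) :
    ∑ p, ∑ q, ‖ptransB (vecMulVec x y) p q‖ ^ 2 = ‖toLp 2 x‖ ^ 2 * ‖toLp 2 y‖ ^ 2 := by
  let swap : (ιA × ιB) × (ιA × ιB) → (ιA × ιB) × (ιA × ιB) :=
    fun pq => ((pq.1.1, pq.2.2), (pq.2.1, pq.1.2))
  rw [EuclideanSpace.norm_sq_eq, EuclideanSpace.norm_sq_eq, Finset.sum_mul_sum,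
    ← Fintype.sum_prod_type', ← Fintype.sum_prod_type']
  refine Fintype.sum_equiv (Function.Involutive.toPerm swap fun _ => rfl) _ _ fun pq => ?_
  simp only [ptransB, of_apply, vecMulVec_apply, norm_mul, mul_pow]
  rfl

variable [DecidableEq ιA] [DecidableEq ιB]

theorem rank_ptransB_vecMulVec_le (x y : ιA × ιB → ℂ) :
    (ptransB (vecMulVec x y)).rank ≤ min (Fintype.card ιA) (Fintype.card ιB) ^ 2 := by
  have hA : (ptransB (vecMulVec x y)).rank ≤ Fintype.card ιA ^ 2 := by
    let L : Matrix (ιA × ιB) (ιA × ιA) ℂ := of fun p c => if p.1 = c.1 then y (c.2, p.2) else 0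
    let R : Matrix (ιA × ιA) (ιA × ιB) ℂ := of fun c q => if c.2 = q.1 then x (c.1, q.2) else 0
    have hfactor : ptransB (vecMulVec x y) = L * R := by
      ext p q
      simp [L, R, ptransB, vecMulVec_apply, Matrix.mul_apply, Fintype.sum_prod_type, mul_comm]
    rw [hfactor, sq, ← Fintype.card_prod]
    exact (rank_mul_le_left L R).trans (rank_le_card_width L)
  have hB : (ptransB (vecMulVec x y)).rank ≤ Fintype.card ιB ^ 2 := by
    let L : Matrix (ιA × ιB) (ιB × ιB) ℂ := of fun p d => if p.2 = d.1 then x (p.1, d.2) else 0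
    let R : Matrix (ιB × ιB) (ιA × ιB) ℂ := of fun d q => if d.2 = q.2 then y (q.1, d.1) else 0
    have hfactor : ptransB (vecMulVec x y) = L * R := by
      ext p q
      simp [L, R, ptransB, vecMulVec_apply, Matrix.mul_apply, Fintype.sum_prod_type]
    rw [hfactor, sq, ← Fintype.card_prod]
    exact (rank_mul_le_left L R).trans (rank_le_card_width L)
  rcases le_total (Fintype.card ιA) (Fintype.card ιB) with h | h
  · rwa [min_eq_left h]
  · rwa [min_eq_right h]

theorem traceNorm_ptransB_vecMulVec_le (x y : ιA × ιB → ℂ) :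
    traceNorm (ptransB (vecMulVec x y)) ≤
      (min (Fintype.card ιA) (Fintype.card ιB) : ℝ) * (‖toLp 2 x‖ * ‖toLp 2 y‖) := by
  refine (pow_le_pow_iff_left₀ (traceNorm_nonneg _) (by positivity) two_ne_zero).mp ?_
  calc traceNorm (ptransB (vecMulVec x y)) ^ 2
      ≤ (ptransB (vecMulVec x y)).rank * (‖toLp 2 x‖ ^ 2 * ‖toLp 2 y‖ ^ 2) := by
        rw [← sum_sq_norm_ptransB_vecMulVec]
        exact sq_traceNorm_le_rank_mul_sum_sq_norm _
    _ ≤ (min (Fintype.card ιA) (Fintype.card ιB) ^ 2 : ℕ) *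
          (‖toLp 2 x‖ ^ 2 * ‖toLp 2 y‖ ^ 2) := by
        gcongr
        exact rank_ptransB_vecMulVec_le x y
    _ = _ := by push_cast; ring

end PartialTranspose

theorem traceNorm_ptransB_le_general {ιA ιB : Type*}
    [Fintype ιA] [DecidableEq ιA]
    [Fintype ιB] [DecidableEq ιB]
    (ρ : Matrix (ιA × ιB) (ιA × ιB) ℂ) :
    traceNorm (ptransB ρ) ≤
      (min (Fintype.card ιA) (Fintype.card ιB) : ℝ) * traceNorm ρ := by
  set b := singularBasis ρ
  have hstar : ∀ j, ‖toLp 2 (star ⇑(b j))‖ = 1 := fun j => by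
    rw [EuclideanSpace.norm_eq, ← b.norm_eq_one j, EuclideanSpace.norm_eq]
    simp only [Pi.star_apply, norm_star]
  calc traceNorm (ptransB ρ)
      = traceNorm (∑ j, ptransB (vecMulVec (ρ *ᵥ b j) (star ⇑(b j)))) := by
        rw [← ptransB_sum, ← eq_sum_vecMulVec_mulVec]
    _ ≤ ∑ j, traceNorm (ptransB (vecMulVec (ρ *ᵥ b j) (star ⇑(b j)))) := traceNorm_sum_le _ _
    _ ≤ ∑ j, (min (Fintype.card ιA) (Fintype.card ιB) : ℝ) *
          (‖toLp 2 (ρ *ᵥ b j)‖ * ‖toLp 2 (star ⇑(b j))‖) :=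
        Finset.sum_le_sum fun j _ => traceNorm_ptransB_vecMulVec_le _ _
    _ = (min (Fintype.card ιA) (Fintype.card ιB) : ℝ) * traceNorm ρ := by
        simp_rw [hstar, mul_one, b, norm_mulVec_singularBasis, ← Finset.mul_sum,
          traceNorm_eq_sum_singularValues]

/-- **Trace-norm bound for the partial transpose:**
`‖ρ^{T_B}‖₁ ≤ min(d_A, d_B) · ‖ρ‖₁`. -/
theorem traceNorm_ptransB_le {ιA ιB : Type*}
    [Fintype ιA] [DecidableEq ιA] [Nonempty ιA]
    [Fintype ιB] [DecidableEq ιB] [Nonempty ιB]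
    (ρ : Matrix (ιA × ιB) (ιA × ιB) ℂ) :
    traceNorm (ptransB ρ) ≤
      (min (Fintype.card ιA) (Fintype.card ιB) : ℝ) * traceNorm ρ :=
  traceNorm_ptransB_le_general ρ
end
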